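/- Let (R_j) be a sequence of bounded convex sets in ℝⁿ such that diam(R_j) → ∞ and sup_j |R_j| < ∞. Then for every bounded set B ⊆ ℝⁿ, lim_{j→∞} |B ∩ R_j| = 0, where |·| denotes Lebesgue measure. -/

import Mathlib

/-!
If `y ∈ R` is far from `x`, the images of `S = R ∩ closedBall x r` under the homotheties centred
at `y` with ratios `1 - k / (2N)`, `k < N`, lie in `R` by convexity, lie in pairwise disjoint balls
of radius `r` (their centres are `dist y x / (2N) > 2r` apart), and each has measure at least
`2⁻ⁿ |S|`; hence `N |S| ≤ 2ⁿ |R|`. As `diam R_j → ∞`, such a far point exists in `R_j` for every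
`N` eventually, so `|B ∩ R_j| ≤ |S| ≤ 2ⁿ C / N`.
-/

open MeasureTheory Set Filter Metric AffineMap Module
open scoped ENNReal

lemma Convex.homothety_image_subset {E : Type*} [AddCommGroup E] [Module ℝ E] {R S : Set E}
    (hR : Convex ℝ R) {y : E} (hy : y ∈ R) (hS : S ⊆ R) {t : ℝ} (ht : t ∈ Icc 0 1) :
    homothety y t '' S ⊆ R := by
  rintro _ ⟨s, hs, rfl⟩
  rw [homothety_eq_lineMap]
  exact hR.lineMap_mem hy (hS hs) ht

lemma homothety_image_closedBall_subset {E : Type*} [NormedAddCommGroup E] [NormedSpace ℝ E]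
    (y x : E) {t : ℝ} (ht : |t| ≤ 1) (r : ℝ) :
    homothety y t '' closedBall x r ⊆ closedBall (homothety y t x) r := by
  rintro _ ⟨s, hs, rfl⟩
  rw [mem_closedBall] at hs ⊢
  have hdist : dist (homothety y t s) (homothety y t x) = |t| * dist s x := by
    simp only [homothety_apply, vsub_eq_sub, vadd_eq_add, dist_add_right, dist_smul₀,
      dist_sub_right, Real.norm_eq_abs]
  rw [hdist]
  nlinarith [abs_nonneg t, dist_nonneg (x := s) (y := x)]

lemma two_mul_lt_dist_lineMap_of_ne {E : Type*} [NormedAddCommGroup E] [NormedSpace ℝ E]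
    {x y : E} {r : ℝ} {N k l : ℕ} (hN0 : 0 < N) (hN : 4 * r * N < dist y x) (hkl : k ≠ l) :
    2 * r < dist (lineMap y x (1 - k / (2 * N) : ℝ)) (lineMap y x (1 - l / (2 * N) : ℝ)) := by
  have hN0' : (0 : ℝ) < N := Nat.cast_pos.2 hN0
  have hkl' : (1 : ℝ) ≤ |(k : ℝ) - l| := by
    exact_mod_cast Int.one_le_abs (sub_ne_zero.2 (Nat.cast_injective.ne hkl))
  have hratio : dist (1 - k / (2 * N) : ℝ) (1 - l / (2 * N)) = |(k : ℝ) - l| / (2 * N) := by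
    rw [Real.dist_eq,
      show 1 - (k : ℝ) / (2 * N) - (1 - l / (2 * N)) = -((k - l) / (2 * N)) by ring,
      abs_neg, abs_div, abs_of_pos (by positivity : (0 : ℝ) < 2 * N)]
  rw [dist_lineMap_lineMap, hratio, div_mul_eq_mul_div, lt_div_iff₀ (by positivity)]
  nlinarith [dist_nonneg (x := y) (y := x)]

lemma exists_lt_dist_of_two_mul_lt_diam {α : Type*} [PseudoMetricSpace α] {s : Set α} (x : α)
    {ρ : ℝ} (hρ : 0 ≤ ρ) (h : 2 * ρ < diam s) : ∃ y ∈ s, ρ < dist y x := by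
  by_contra! hs
  exact h.not_ge ((diam_mono hs isBounded_closedBall).trans (diam_closedBall hρ))

section AddHaar

variable {E : Type*} [NormedAddCommGroup E] [NormedSpace ℝ E] [FiniteDimensional ℝ E]
  [MeasurableSpace E] [BorelSpace E] (μ : Measure E) [μ.IsAddHaarMeasure]

lemma measure_le_two_pow_mul_measure_homothety_image (y : E) {t : ℝ} (ht : 1 / 2 ≤ t)
    (S : Set E) : μ S ≤ 2 ^ finrank ℝ E * μ (homothety y t '' S) := by
  have hscale : 1 ≤ (2 : ℝ≥0∞) ^ finrank ℝ E * ENNReal.ofReal |t ^ finrank ℝ E| := by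
    rw [← ENNReal.ofReal_ofNat, ← ENNReal.ofReal_pow zero_le_two,
      ← ENNReal.ofReal_mul (by positivity), ENNReal.one_le_ofReal,
      abs_of_nonneg (by positivity), ← mul_pow]
    exact one_le_pow₀ (by linarith)
  rw [Measure.addHaar_image_homothety, ← mul_assoc]
  exact le_mul_of_one_le_left' hscale

theorem Convex.natCast_mul_measure_inter_closedBall_le {R : Set E} (hR : Convex ℝ R) {x y : E}
    (hy : y ∈ R) {r : ℝ} {N : ℕ} (hN : 4 * r * N < dist y x) :
    N * μ (R ∩ closedBall x r) ≤ 2 ^ finrank ℝ E * μ R := by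
  rcases N.eq_zero_or_pos with rfl | hN0
  · simp
  set S := R ∩ closedBall x r
  have hN0' : (0 : ℝ) < N := Nat.cast_pos.2 hN0
  set t : ℕ → ℝ := fun k => 1 - k / (2 * N)
  set A : ℕ → Set E := fun k => homothety y (t k) '' S
  have ht : ∀ k ∈ Finset.range N, t k ∈ Icc (1 / 2) 1 := by
    intro k hk
    have hkN : (k : ℝ) ≤ N := by exact_mod_cast (Finset.mem_range.1 hk).le
    have hk_half : (k : ℝ) / (2 * N) ≤ 1 / 2 := by
      rw [div_le_iff₀ (by positivity)]
      linarith
    exact ⟨by linarith, by linarith [show 0 ≤ (k : ℝ) / (2 * N) by positivity]⟩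
  have hA_sub : ∀ k ∈ Finset.range N, A k ⊆ R := fun k hk =>
    hR.homothety_image_subset hy inter_subset_left
      ⟨by linarith [(ht k hk).1], (ht k hk).2⟩
  have hA_ball : ∀ k ∈ Finset.range N, A k ⊆ closedBall (lineMap y x (t k)) r := by
    intro k hk
    rw [← homothety_eq_lineMap]
    refine (image_mono inter_subset_right).trans (homothety_image_closedBall_subset y x ?_ r)
    rw [abs_le]
    constructor <;> linarith [(ht k hk).1, (ht k hk).2]
  have hdisj : (Finset.range N : Set ℕ).Pairwise (Function.onFun (AEDisjoint μ) A) :=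
    fun k hk l hl hkl =>
      ((closedBall_disjoint_closedBall (two_mul r ▸ two_mul_lt_dist_lineMap_of_ne hN0 hN hkl)).mono
        (hA_ball k hk) (hA_ball l hl)).aedisjoint
  have hmeas : ∀ k ∈ Finset.range N, NullMeasurableSet (A k) μ := fun k _ =>
    ((hR.inter (convex_closedBall x r)).affine_image (homothety y (t k))).nullMeasurableSet μ
  calc (N : ℝ≥0∞) * μ S = ∑ _k ∈ Finset.range N, μ S := by simp
    _ ≤ ∑ k ∈ Finset.range N, 2 ^ finrank ℝ E * μ (A k) := Finset.sum_le_sum fun k hk =>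
      measure_le_two_pow_mul_measure_homothety_image μ y (ht k hk).1 S
    _ = 2 ^ finrank ℝ E * μ (⋃ k ∈ Finset.range N, A k) := by
      rw [← Finset.mul_sum, measure_biUnion_finset₀ hdisj hmeas]
    _ ≤ 2 ^ finrank ℝ E * μ R := by
      gcongr
      exact iUnion₂_subset hA_sub

end AddHaar

theorem convex_large_diam_small_intersection (n : ℕ)
    (R : ℕ → Set (EuclideanSpace ℝ (Fin n)))
    (hconv : ∀ j, Convex ℝ (R j))
    (hdiam : Filter.Tendsto (fun j => Metric.diam (R j)) Filter.atTop Filter.atTop)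
    (hvol : ∃ C : ℝ≥0∞, C < ⊤ ∧ ∀ j, volume (R j) ≤ C)
    (B : Set (EuclideanSpace ℝ (Fin n))) (hB : Bornology.IsBounded B) :
    Filter.Tendsto (fun j => volume (B ∩ R j)) Filter.atTop (nhds 0) := by
  obtain ⟨C, hC, hRC⟩ := hvol
  obtain ⟨r, hr, hBr⟩ := hB.subset_closedBall_lt 0 0
  rw [ENNReal.tendsto_nhds_zero]
  intro ε hε
  obtain ⟨N, hN⟩ := ENNReal.exists_nat_mul_gt (b := 2 ^ n * C) hε.ne' (by finiteness)
  filter_upwards [hdiam.eventually_gt_atTop (2 * (4 * r * N))] with j hj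
  obtain ⟨y, hy, hy_far⟩ := exists_lt_dist_of_two_mul_lt_diam 0 (by positivity) hj
  have hpack := (hconv j).natCast_mul_measure_inter_closedBall_le volume hy hy_far
  rw [finrank_euclideanSpace_fin] at hpack
  refine (lt_of_mul_lt_mul_left' (a := (N : ℝ≥0∞)) ?_).le
  calc (N : ℝ≥0∞) * volume (B ∩ R j) ≤ N * volume (R j ∩ closedBall 0 r) := by
        gcongr _ * volume ?_
        exact fun z hz => ⟨hz.2, hBr hz.1⟩
    _ ≤ 2 ^ n * volume (R j) := hpack
    _ ≤ 2 ^ n * C := by gcongr; exact hRC j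
    _ < N * ε := hN
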